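/- arXiv:2512.02545 — 9 statements merged into one kernel-verified Lean document; each statement's English description precedes it below -/
import Mathlib

section
/- The subring of ℚ generated by the set {1/p : p ∈ P}, where P is a set of prime numbers, equals the set of rational numbers q such that every prime dividing the denominator of q (in lowest terms) belongs to P. -/
/-- The subring of ℚ generated by the inverses of the primes in `P`. -/
def RP (P : Set ℕ) : Subring ℚ :=
  Subring.closure {q : ℚ | ∃ p ∈ P, q = (p : ℚ)⁻¹}

/-- The right-hand side as a subring. -/
def RPset (P : Set ℕ) : Subring ℚ where
  carrier := {q : ℚ | ∀ r : ℕ, r.Prime → r ∣ q.den → r ∈ P}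
  zero_mem' := by intro r hr hd; simp at hd; exact absurd hd hr.ne_one
  one_mem' := by intro r hr hd; simp at hd; exact absurd hd hr.ne_one
  add_mem' := by
    intro a b ha hb r hr hd
    have := hd.trans (Rat.add_den_dvd a b)
    rcases (Nat.Prime.dvd_mul hr).mp this with h | h
    · exact ha r hr h
    · exact hb r hr h
  mul_mem' := by
    intro a b ha hb r hr hd
    have := hd.trans (Rat.mul_den_dvd a b)
    rcases (Nat.Prime.dvd_mul hr).mp this with h | h
    · exact ha r hr h
    · exact hb r hr h
  neg_mem' := by intro a ha r hr hd; rw [Rat.neg_den] at hd; exact ha r hr hd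

lemma inv_mem_RP (P : Set ℕ) : ∀ n : ℕ, 0 < n →
    (∀ r : ℕ, r.Prime → r ∣ n → r ∈ P) → ((n : ℚ)⁻¹ ∈ RP P) := by
  intro n
  induction n using Nat.strong_induction_on with
  | _ n ih =>
    intro hn hfac
    rcases eq_or_lt_of_le (show 1 ≤ n from hn) with h1 | h1
    · simp [← h1]
    · set p := n.minFac with hp
      have hpprime : p.Prime := Nat.minFac_prime (by omega)
      have hpd : p ∣ n := Nat.minFac_dvd n
      obtain ⟨m, hm⟩ := hpd
      have hm0 : 0 < m := Nat.pos_of_ne_zero fun h => by subst h; simp at hm; omega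
      have hmlt : m < n := by
        have := hpprime.two_le
        nlinarith
      have hminv : ((m : ℚ)⁻¹ ∈ RP P) := by
        apply ih m hmlt hm0
        intro r hr hrd
        exact hfac r hr (hrd.trans ⟨p, by rw [hm]; ring⟩)
      have hpinv : ((p : ℚ)⁻¹ ∈ RP P) :=
        Subring.subset_closure ⟨p, hfac p hpprime (Nat.minFac_dvd n), rfl⟩
      have : (n : ℚ)⁻¹ = (p : ℚ)⁻¹ * (m : ℚ)⁻¹ := by
        rw [hm]; push_cast; rw [mul_inv]
      rw [this]
      exact Subring.mul_mem _ hpinv hminv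

theorem stmt_0 (P : Set ℕ) (hP : ∀ p ∈ P, p.Prime) :
    (RP P : Set ℚ) = {q : ℚ | ∀ r : ℕ, r.Prime → r ∣ q.den → r ∈ P} := by
  apply le_antisymm
  · have : RP P ≤ RPset P := by
      apply Subring.closure_le.mpr
      rintro q ⟨p, hpP, rfl⟩
      intro r hr hd
      have hp := hP p hpP
      rw [Rat.inv_natCast_den_of_pos hp.pos] at hd
      rwa [(Nat.prime_dvd_prime_iff_eq hr hp).mp hd]
    exact this
  · intro q hq
    have hden : ((q.den : ℚ)⁻¹ ∈ RP P) := inv_mem_RP P q.den q.pos hq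
    have : q = (q.num : ℚ) * (q.den : ℚ)⁻¹ := by
      rw [← div_eq_mul_inv, Rat.num_div_den]
    rw [SetLike.mem_coe] at *
    rw [this]
    exact Subring.mul_mem _ (intCast_mem (RP P) q.num) hden
end

section
/- If q is a prime not belonging to P, then the only element x of R_P such that q^n divides x in R_P for every natural number n is x = 0. -/
lemma val_nonneg (P : Set ℕ) (hP : ∀ p ∈ P, p.Prime) (q : ℕ) (hq : q.Prime) (hqP : q ∉ P)
    {y : ℚ} (hy : y ∈ RP P) : y ≠ 0 → 0 ≤ padicValRat q y := by
  haveI : Fact q.Prime := ⟨hq⟩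
  induction hy using Subring.closure_induction with
  | mem z hz =>
    intro hz0
    obtain ⟨p, hp, rfl⟩ := hz
    have hpprime := hP p hp
    have hpq : p ≠ q := fun h => hqP (h ▸ hp)
    rw [padicValRat.inv, padicValRat.of_nat]
    have : padicValNat q p = 0 := padicValNat.eq_zero_of_not_dvd (by
      intro hd
      exact hpq ((Nat.prime_dvd_prime_iff_eq hq hpprime).mp hd).symm)
    simp [this]
  | zero => intro h0; simp at h0
  | one => intro _; simp
  | add a b ha hb iha ihb =>
    intro hab
    rcases eq_or_ne a 0 with rfl | ha0
    · simpa using ihb (by simpa using hab)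
    rcases eq_or_ne b 0 with rfl | hb0
    · simpa using iha (by simpa using hab)
    calc (0 : ℤ) ≤ min (padicValRat q a) (padicValRat q b) :=
          le_min (iha ha0) (ihb hb0)
      _ ≤ padicValRat q (a + b) := padicValRat.min_le_padicValRat_add hab
  | neg a ha iha =>
    intro ha0
    rw [padicValRat.neg]
    exact iha (by simpa using ha0)
  | mul a b ha hb iha ihb =>
    intro hab
    have ha0 : a ≠ 0 := left_ne_zero_of_mul hab
    have hb0 : b ≠ 0 := right_ne_zero_of_mul hab
    rw [padicValRat.mul ha0 hb0]
    exact add_nonneg (iha ha0) (ihb hb0)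

theorem stmt_3 (P : Set ℕ) (hP : ∀ p ∈ P, p.Prime) (q : ℕ) (hq : q.Prime) (hqP : q ∉ P)
    (x : RP P) (h : ∀ n : ℕ, (q : RP P) ^ n ∣ x) : x = 0 := by
  haveI : Fact q.Prime := ⟨hq⟩
  by_contra hx
  have hx0 : (x : ℚ) ≠ 0 := fun h0 => hx (Subtype.ext h0)
  have hq0 : (q : ℚ) ≠ 0 := Nat.cast_ne_zero.mpr hq.ne_zero
  have key : ∀ n : ℕ, (n : ℤ) ≤ padicValRat q (x : ℚ) := by
    intro n
    obtain ⟨y, hy⟩ := h n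
    have hyQ : (x : ℚ) = (q : ℚ) ^ n * (y : ℚ) := by
      have := congrArg (Subtype.val) hy
      push_cast at this
      simpa using this
    have hy0 : (y : ℚ) ≠ 0 := by
      intro h0; rw [h0, mul_zero] at hyQ; exact hx0 hyQ
    have hvy : 0 ≤ padicValRat q (y : ℚ) := val_nonneg P hP q hq hqP y.2 hy0
    rw [hyQ, padicValRat.mul (pow_ne_zero n hq0) hy0,
      padicValRat.pow (q : ℚ), padicValRat.self hq.one_lt]
    omega
  have := key ((padicValRat q (x : ℚ)).toNat + 1)
  omega
end

section
/- An integer n ≠ 0 is invertible in the ring R_P if and only if every prime factor of n belongs to P. -/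
theorem Subring.inv_mem_of_isUnit {K : Type*} [DivisionRing K] {S : Subring K} {x : S}
    (hx : IsUnit x) : (x : K)⁻¹ ∈ S := by
  obtain ⟨u, rfl⟩ := hx
  convert (u⁻¹ : Sˣ).1.2
  exact (map_units_inv S.subtype u).symm

theorem isUnit_natCast_of_forall_prime_dvd {R : Type*} [Semiring R] {m : ℕ} (hm : m ≠ 0)
    (h : ∀ p : ℕ, p.Prime → p ∣ m → IsUnit (p : R)) : IsUnit (m : R) := by
  induction m using induction_on_primes with
  | zero => exact absurd rfl hm
  | one => simp
  | prime_mul p a hp ih =>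
    rw [Nat.cast_mul]
    exact (h p hp (dvd_mul_right p a)).mul
      (ih (right_ne_zero_of_mul hm) fun q hq hqa => h q hq (hqa.mul_left p))

theorem isUnit_intCast_iff_isUnit_natAbs {R : Type*} [Ring R] (n : ℤ) :
    IsUnit (n : R) ↔ IsUnit (n.natAbs : R) := by
  rcases Int.natAbs_eq n with h | h <;> rw [h] <;> simp

namespace RP

variable {P : Set ℕ}

theorem isUnit_natCast_of_mem {p : ℕ} (hpP : p ∈ P) (hp : p ≠ 0) : IsUnit (p : RP P) :=
  IsUnit.of_mul_eq_one ⟨(p : ℚ)⁻¹, Subring.subset_closure ⟨p, hpP, rfl⟩⟩ <|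
    Subtype.ext (by simp [hp])

theorem le_comap_padicIntSubring (hP : ∀ q ∈ P, q.Prime) {p : ℕ} [Fact p.Prime]
    (hpP : p ∉ P) :
    RP P ≤ (PadicInt.subring p).comap (Rat.castHom ℚ_[p]) := by
  refine Subring.closure_le.2 ?_
  rintro _ ⟨q, hq, rfl⟩
  have hpq : p.Coprime q := (Nat.Prime.coprime_iff_not_dvd Fact.out).2 fun hdvd =>
    hpP ((Nat.prime_dvd_prime_iff_eq Fact.out (hP q hq)).1 hdvd ▸ hq)
  simp [PadicInt.mem_subring_iff, Padic.norm_natCast_eq_one_iff.2 hpq]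

theorem not_dvd_of_isUnit_intCast (hP : ∀ q ∈ P, q.Prime) {p : ℕ} (hp : p.Prime)
    (hpP : p ∉ P) {n : ℤ} (hn : IsUnit (n : RP P)) : ¬ (p : ℤ) ∣ n := by
  have := Fact.mk hp
  intro hpn
  have hn0 : n ≠ 0 := by rintro rfl; simp at hn
  have hinv : ‖(n : ℚ_[p])⁻¹‖ ≤ 1 := by
    simpa [PadicInt.mem_subring_iff] using
      le_comap_padicIntSubring hP hpP (Subring.inv_mem_of_isUnit hn)
  have hlt : ‖(n : ℚ_[p])‖ < 1 := Padic.norm_intCast_lt_one_iff.2 hpn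
  have hpos : 0 < ‖(n : ℚ_[p])‖ := norm_pos_iff.2 (by exact_mod_cast hn0)
  rw [norm_inv] at hinv
  exact not_le.2 hlt ((inv_le_one₀ hpos).1 hinv)

end RP

theorem stmt_4 (P : Set ℕ) (hP : ∀ p ∈ P, p.Prime) (n : ℤ) (hn : n ≠ 0) :
    IsUnit (n : RP P) ↔ ∀ p : ℕ, p.Prime → (p : ℤ) ∣ n → p ∈ P := by
  constructor
  · intro hunit p hp hpn
    by_contra hpP
    exact RP.not_dvd_of_isUnit_intCast hP hp hpP hunit hpn
  · intro h
    rw [isUnit_intCast_iff_isUnit_natAbs]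
    exact isUnit_natCast_of_forall_prime_dvd (Int.natAbs_ne_zero.2 hn) fun p hp hpn =>
      RP.isUnit_natCast_of_mem (h p hp (Int.natCast_dvd.2 hpn)) hp.ne_zero
end

section
/- With G*_U as above and G_λ the subgroup generated by {p₁^{-n} x_α : α ∈ λ, n ∈ ℕ} (i.e., the direct sum ⨁_{α<λ} R_{p₁}·x_α), G_λ is a pure subgroup of G*_U: for every integer m and g ∈ G_λ, if m divides g in G*_U then m divides g in G_λ. -/
/-- `q` lies in `ℤ[1/p]`. -/
def Dp (p : ℕ) (q : ℚ) : Prop := ∃ (a : ℤ) (n : ℕ), q * (p : ℚ) ^ n = a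

lemma Dp_zero (p : ℕ) : Dp p 0 := ⟨0, 0, by simp⟩

lemma Dp_add {p : ℕ} {q r : ℚ} (hq : Dp p q) (hr : Dp p r) : Dp p (q + r) := by
  obtain ⟨a, n, ha⟩ := hq
  obtain ⟨b, m, hb⟩ := hr
  refine ⟨a * (p:ℤ)^m + b * (p:ℤ)^n, n + m, ?_⟩
  push_cast
  rw [pow_add]
  calc (q + r) * ((p:ℚ)^n * (p:ℚ)^m) = (q * (p:ℚ)^n) * (p:ℚ)^m + (r * (p:ℚ)^m) * (p:ℚ)^n := by ring
  _ = (a:ℚ) * (p:ℚ)^m + (b:ℚ) * (p:ℚ)^n := by rw [ha, hb]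

lemma Dp_neg {p : ℕ} {q : ℚ} (hq : Dp p q) : Dp p (-q) := by
  obtain ⟨a, n, ha⟩ := hq
  exact ⟨-a, n, by push_cast; linarith⟩

lemma Dp_int (p : ℕ) (a : ℤ) : Dp p (a : ℚ) := ⟨a, 0, by simp⟩

lemma Dp_inv_pow {p : ℕ} (hp : (p:ℚ) ≠ 0) (n : ℕ) : Dp p (((p:ℚ)^n)⁻¹) :=
  ⟨1, n, by field_simp; norm_num⟩

lemma Dp_den_dvd {p : ℕ} (hp : (p:ℚ) ≠ 0) {q : ℚ} (h : Dp p q) : ∃ n : ℕ, q.den ∣ p ^ n := by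
  obtain ⟨a, n, ha⟩ := h
  refine ⟨n, ?_⟩
  have hq : q = (a : ℚ) / ((p:ℚ)^n) := by
    have h0 : ((p:ℚ)^n) ≠ 0 := pow_ne_zero _ hp
    field_simp
    linarith
  have : q = Rat.divInt a ((p:ℤ)^n) := by rw [Rat.divInt_eq_div]; push_cast; exact hq
  have hd : ((Rat.divInt a ((p:ℤ)^n)).den : ℤ) ∣ (p:ℤ)^n := Rat.den_dvd a _
  rw [← this] at hd
  have : ((q.den : ℤ)) ∣ ((p^n : ℕ) : ℤ) := by push_cast; exact hd
  exact_mod_cast this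

lemma Dp_int_of {p₃ p₄ p₅ : ℕ} (h3 : p₃.Prime) (h4 : p₄.Prime) (h5 : p₅.Prime)
    (h34 : p₃ ≠ p₄) (h35 : p₃ ≠ p₅) {b c : ℚ}
    (hb : Dp p₄ b) (hc : Dp p₅ c) (hbc : Dp p₃ (b + c)) : ∃ k : ℤ, b + c = (k : ℚ) := by
  obtain ⟨n₃, hd3⟩ := Dp_den_dvd (by exact_mod_cast h3.ne_zero) hbc
  have hbc' : Dp (p₄ * p₅) (b + c) := by
    obtain ⟨a, n, ha⟩ := hb
    obtain ⟨a', m, ha'⟩ := hc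
    refine ⟨a * (p₄:ℤ)^m * (p₅:ℤ)^(n+m) + a' * (p₅:ℤ)^n * (p₄:ℤ)^(n+m), n + m, ?_⟩
    push_cast
    rw [mul_pow, pow_add, pow_add]
    calc (b + c) * ((p₄:ℚ)^n * (p₄:ℚ)^m * ((p₅:ℚ)^n * (p₅:ℚ)^m))
        = (b * (p₄:ℚ)^n) * ((p₄:ℚ)^m * ((p₅:ℚ)^n * (p₅:ℚ)^m))
          + (c * (p₅:ℚ)^m) * ((p₅:ℚ)^n * ((p₄:ℚ)^n * (p₄:ℚ)^m)) := by ring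
    _ = _ := by rw [ha, ha']; ring
  obtain ⟨n₄₅, hd45⟩ := Dp_den_dvd (by push_cast; exact mul_ne_zero (by exact_mod_cast h4.ne_zero) (by exact_mod_cast h5.ne_zero)) hbc'
  have hcop : Nat.Coprime (p₃ ^ n₃) ((p₄ * p₅) ^ n₄₅) := by
    apply Nat.Coprime.pow
    exact Nat.Coprime.mul_right ((Nat.coprime_primes h3 h4).mpr h34)
      ((Nat.coprime_primes h3 h5).mpr h35)
  have hden : (b + c).den = 1 := Nat.eq_one_of_dvd_one (hcop ▸ Nat.dvd_gcd hd3 hd45)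
  exact ⟨(b + c).num, by rw [← Rat.num_div_den (b + c), hden]; simp⟩


/-- The basis vector `x_α` of the ambient ℚ-vector space. -/
noncomputable def xx {ι : Type*} (α : ι) : (ι ⊕ Unit ⊕ ι) →₀ ℚ :=
  Finsupp.single (Sum.inl α) 1

/-- The basis vector `y` of the ambient ℚ-vector space. -/
noncomputable def yy (ι : Type*) : (ι ⊕ Unit ⊕ ι) →₀ ℚ :=
  Finsupp.single (Sum.inr (Sum.inl ())) 1

/-- The basis vector `z_α` of the ambient ℚ-vector space. -/
noncomputable def zz {ι : Type*} (α : ι) : (ι ⊕ Unit ⊕ ι) →₀ ℚ :=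
  Finsupp.single (Sum.inr (Sum.inr α)) 1

/-- The group `G*_U` of the construction. -/
noncomputable def Gstar {ι : Type*} (p₁ p₂ p₃ p₄ p₅ : ℕ) (U : Set ι) :
    AddSubgroup ((ι ⊕ Unit ⊕ ι) →₀ ℚ) :=
  AddSubgroup.closure
    ({v | ∃ (α : ι) (n : ℕ), v = ((p₁ : ℚ) ^ n)⁻¹ • xx α} ∪
     {v | ∃ n : ℕ, v = ((p₂ : ℚ) ^ n)⁻¹ • yy ι} ∪
     {v | ∃ (α : ι) (n : ℕ), v = ((p₃ : ℚ) ^ n)⁻¹ • zz α} ∪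
     {v | ∃ α ∈ U, ∃ n : ℕ, v = ((p₄ : ℚ) ^ n)⁻¹ • (xx α + zz α)} ∪
     {v | ∃ α ∈ U, ∃ n : ℕ, v = ((p₅ : ℚ) ^ n)⁻¹ • (xx α + yy ι + zz α)})

/-- The group `G_λ`, the direct sum of copies of `R_{p₁}` generated by the `x_α`. -/
noncomputable def Glam (ι : Type*) (p₁ : ℕ) : AddSubgroup ((ι ⊕ Unit ⊕ ι) →₀ ℚ) :=
  AddSubgroup.closure {v | ∃ (α : ι) (n : ℕ), v = ((p₁ : ℚ) ^ n)⁻¹ • xx α}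

lemma Glam_apply_inr {ι : Type*} {p₁ : ℕ} {g : (ι ⊕ Unit ⊕ ι) →₀ ℚ}
    (hg : g ∈ Glam ι p₁) (w : Unit ⊕ ι) : g (Sum.inr w) = 0 := by
  induction hg using AddSubgroup.closure_induction with
  | mem v hv => obtain ⟨α, n, rfl⟩ := hv; simp [xx, Finsupp.single_apply]
  | zero => simp
  | add x y hx hy ihx ihy => simp [ihx, ihy]
  | neg x hx ihx => simp [ihx]

lemma single_mem_Glam {ι : Type*} {p₁ : ℕ} (hp1 : (p₁:ℚ) ≠ 0) {q : ℚ}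
    (hq : ∃ (a : ℤ) (n : ℕ), q * (p₁ : ℚ) ^ n = a) (α : ι) :
    Finsupp.single (Sum.inl α) q ∈ Glam ι p₁ := by
  obtain ⟨a, n, ha⟩ := hq
  have hq' : q = (a : ℤ) • (((p₁:ℚ)^n)⁻¹) := by
    have h0 : ((p₁:ℚ)^n) ≠ 0 := pow_ne_zero _ hp1
    rw [zsmul_eq_mul]
    field_simp
    linarith
  have : Finsupp.single (Sum.inl α) q = (a : ℤ) • (((p₁:ℚ)^n)⁻¹ • xx α) := by
    rw [xx, Finsupp.smul_single, Finsupp.smul_single, hq']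
    simp
  rw [this]
  apply AddSubgroup.zsmul_mem
  apply AddSubgroup.subset_closure
  exact ⟨α, n, rfl⟩

lemma mem_Glam_of {ι : Type*} {p₁ : ℕ} (hp1 : (p₁:ℚ) ≠ 0) {h : (ι ⊕ Unit ⊕ ι) →₀ ℚ}
    (h1 : ∀ α, ∃ (a : ℤ) (n : ℕ), h (Sum.inl α) * (p₁ : ℚ) ^ n = a)
    (h2 : ∀ w, h (Sum.inr w) = 0) : h ∈ Glam ι p₁ := by
  rw [← Finsupp.sum_single h, Finsupp.sum]
  refine sum_mem fun i hi => ?_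
  cases i with
  | inl α => exact single_mem_Glam hp1 (h1 α) α
  | inr w => rw [h2 w]; simp only [Finsupp.single_zero]; exact zero_mem _

lemma Gstar_struct {ι : Type*} {p₁ p₂ p₃ p₄ p₅ : ℕ} {U : Set ι}
    (hp1 : (p₁:ℚ) ≠ 0) (hp3 : (p₃:ℚ) ≠ 0) (hp4 : (p₄:ℚ) ≠ 0) (hp5 : (p₅:ℚ) ≠ 0)
    {h : (ι ⊕ Unit ⊕ ι) →₀ ℚ} (hh : h ∈ Gstar p₁ p₂ p₃ p₄ p₅ U) (α : ι) :
    ∃ b c : ℚ, Dp p₄ b ∧ Dp p₅ c ∧ Dp p₁ (h (Sum.inl α) - b - c) ∧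
      Dp p₃ (h (Sum.inr (Sum.inr α)) - b - c) := by
  induction hh using AddSubgroup.closure_induction with
  | mem v hv =>
    rcases hv with ((((⟨β, n, rfl⟩ | ⟨n, rfl⟩) | ⟨β, n, rfl⟩) | ⟨β, -, n, rfl⟩) | ⟨β, -, n, rfl⟩)
    · rcases eq_or_ne β α with rfl | hβ
      · exact ⟨0, 0, Dp_zero _, Dp_zero _,
          by simpa [xx, Finsupp.single_apply] using Dp_inv_pow hp1 n,
          by simpa [xx, Finsupp.single_apply] using Dp_zero p₃⟩
      · exact ⟨0, 0, Dp_zero _, Dp_zero _,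
          by simpa [xx, Finsupp.single_apply, hβ] using Dp_zero p₁,
          by simpa [xx, Finsupp.single_apply] using Dp_zero p₃⟩
    · exact ⟨0, 0, Dp_zero _, Dp_zero _,
        by simpa [yy, Finsupp.single_apply] using Dp_zero p₁,
        by simpa [yy, Finsupp.single_apply] using Dp_zero p₃⟩
    · rcases eq_or_ne β α with rfl | hβ
      · exact ⟨0, 0, Dp_zero _, Dp_zero _,
          by simpa [zz, Finsupp.single_apply] using Dp_zero p₁,
          by simpa [zz, Finsupp.single_apply] using Dp_inv_pow hp3 n⟩
      · exact ⟨0, 0, Dp_zero _, Dp_zero _,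
          by simpa [zz, Finsupp.single_apply] using Dp_zero p₁,
          by simpa [zz, Finsupp.single_apply, hβ] using Dp_zero p₃⟩
    · rcases eq_or_ne β α with rfl | hβ
      · refine ⟨((p₄:ℚ)^n)⁻¹, 0, Dp_inv_pow hp4 n, Dp_zero _, ?_, ?_⟩ <;>
          simpa [xx, zz, Finsupp.single_apply] using Dp_zero _
      · refine ⟨0, 0, Dp_zero _, Dp_zero _, ?_, ?_⟩ <;>
          simpa [xx, zz, Finsupp.single_apply, hβ] using Dp_zero _
    · rcases eq_or_ne β α with rfl | hβ
      · refine ⟨0, ((p₅:ℚ)^n)⁻¹, Dp_zero _, Dp_inv_pow hp5 n, ?_, ?_⟩ <;>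
          simpa [xx, yy, zz, Finsupp.single_apply] using Dp_zero _
      · refine ⟨0, 0, Dp_zero _, Dp_zero _, ?_, ?_⟩ <;>
          simpa [xx, yy, zz, Finsupp.single_apply, hβ] using Dp_zero _
  | zero =>
    exact ⟨0, 0, Dp_zero _, Dp_zero _, by simpa using Dp_zero p₁, by simpa using Dp_zero p₃⟩
  | add x y hx hy ihx ihy =>
    obtain ⟨b, c, hb, hc, h1, h3⟩ := ihx
    obtain ⟨b', c', hb', hc', h1', h3'⟩ := ihy
    refine ⟨b + b', c + c', Dp_add hb hb', Dp_add hc hc', ?_, ?_⟩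
    · have : (x + y) (Sum.inl α) - (b + b') - (c + c') =
          (x (Sum.inl α) - b - c) + (y (Sum.inl α) - b' - c') := by
        simp only [Finsupp.add_apply]; ring
      rw [this]; exact Dp_add h1 h1'
    · have : (x + y) (Sum.inr (Sum.inr α)) - (b + b') - (c + c') =
          (x (Sum.inr (Sum.inr α)) - b - c) + (y (Sum.inr (Sum.inr α)) - b' - c') := by
        simp only [Finsupp.add_apply]; ring
      rw [this]; exact Dp_add h3 h3'
  | neg x hx ihx =>
    obtain ⟨b, c, hb, hc, h1, h3⟩ := ihx
    refine ⟨-b, -c, Dp_neg hb, Dp_neg hc, ?_, ?_⟩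
    · have : (-x) (Sum.inl α) - (-b) - (-c) = -(x (Sum.inl α) - b - c) := by
        simp only [Finsupp.neg_apply]; ring
      rw [this]; exact Dp_neg h1
    · have : (-x) (Sum.inr (Sum.inr α)) - (-b) - (-c) = -(x (Sum.inr (Sum.inr α)) - b - c) := by
        simp only [Finsupp.neg_apply]; ring
      rw [this]; exact Dp_neg h3

theorem stmt_9 {ι : Type*} (p₁ p₂ p₃ p₄ p₅ : ℕ)
    (hp : ∀ p ∈ [p₁, p₂, p₃, p₄, p₅], p.Prime)
    (hne : [p₁, p₂, p₃, p₄, p₅].Pairwise (· ≠ ·)) (U : Set ι) :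
    ∀ (m : ℤ), ∀ g ∈ Glam ι p₁,
      (∃ h ∈ Gstar p₁ p₂ p₃ p₄ p₅ U, g = m • h) → ∃ h ∈ Glam ι p₁, g = m • h := by
  intro m g hg ⟨h, hh, hgh⟩
  have hp1 := hp p₁ (by simp)
  have hp3 := hp p₃ (by simp)
  have hp4 := hp p₄ (by simp)
  have hp5 := hp p₅ (by simp)
  simp only [List.pairwise_cons, List.mem_cons] at hne
  obtain ⟨-, -, hne3, -, -⟩ := hne
  have h34 : p₃ ≠ p₄ := hne3 p₄ (Or.inl rfl)
  have h35 : p₃ ≠ p₅ := hne3 p₅ (Or.inr (Or.inl rfl))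
  rcases eq_or_ne m 0 with rfl | hm
  · refine ⟨0, zero_mem _, ?_⟩
    simp only [zero_smul] at hgh ⊢
    exact hgh
  · have hm' : (m : ℚ) ≠ 0 := Int.cast_ne_zero.mpr hm
    have hp1' : (p₁:ℚ) ≠ 0 := Nat.cast_ne_zero.mpr hp1.ne_zero
    have hzero : ∀ w, h (Sum.inr w) = 0 := by
      intro w
      have e1 : g (Sum.inr w) = 0 := Glam_apply_inr hg w
      have e2 : g (Sum.inr w) = (m : ℚ) * h (Sum.inr w) := by
        rw [hgh]; simp [Finsupp.smul_apply]
      rw [e2] at e1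
      rcases mul_eq_zero.mp e1 with h0 | h0
      · exact absurd h0 hm'
      · exact h0
    refine ⟨h, ?_, hgh⟩
    refine mem_Glam_of hp1' (fun α => ?_) hzero
    obtain ⟨b, c, hb, hc, h1, h3⟩ := Gstar_struct hp1'
      (Nat.cast_ne_zero.mpr hp3.ne_zero) (Nat.cast_ne_zero.mpr hp4.ne_zero)
      (Nat.cast_ne_zero.mpr hp5.ne_zero) hh α
    rw [hzero (Sum.inr α)] at h3
    have hbc : Dp p₃ (b + c) := by
      have := Dp_neg h3
      have e : -(0 - b - c) = b + c := by ring
      rwa [e] at this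
    obtain ⟨k, hk⟩ := Dp_int_of hp3 hp4 hp5 h34 h35 hb hc hbc
    have e : h (Sum.inl α) = (h (Sum.inl α) - b - c) + (k : ℚ) := by rw [← hk]; ring
    rw [e]
    exact Dp_add h1 (Dp_int p₁ k)
end

section
/- With G*_U as above: for every α ∈ λ, the element x_α + z_α is divisible by p₄^n in G*_U for all n ∈ ℕ if and only if α ∈ U. -/
/-
If `α ∉ U`, no generator of `G*_U` has a `p₄` in the denominator of its `x_α`-coordinate: those
coordinates are `0` or `p₁⁻ⁿ`. Hence every element of `G*_U` has a `p₄`-adically integral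
`x_α`-coordinate, whereas `h` with `x_α + z_α = p₄ h` would have `x_α`-coordinate `1 / p₄`.
-/

def padicIntegralSubgroup (p : ℕ) [Fact p.Prime] : AddSubgroup ℚ where
  carrier := {q | padicNorm p q ≤ 1}
  zero_mem' := by simp
  add_mem' hq hr := padicNorm.nonarchimedean.trans (max_le hq hr)
  neg_mem' := by simp

theorem mem_padicIntegralSubgroup {p : ℕ} [Fact p.Prime] {q : ℚ} :
    q ∈ padicIntegralSubgroup p ↔ padicNorm p q ≤ 1 :=
  Iff.rfl

theorem padicNorm_inv_pow_of_not_dvd {p m : ℕ} [Fact p.Prime] (h : ¬p ∣ m) (n : ℕ) :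
    padicNorm p ((m : ℚ) ^ n)⁻¹ = 1 := by
  have hmn : padicNorm p ((m ^ n : ℕ) : ℚ) = 1 :=
    (padicNorm.nat_eq_one_iff _).mpr fun hdvd => h ((Fact.out : p.Prime).dvd_of_dvd_pow hdvd)
  rw [inv_eq_one_div, padicNorm.div, ← Nat.cast_pow, hmn, padicNorm.one, div_one]

theorem padicNorm_natCast_mul_ne_one (p : ℕ) [Fact p.Prime] {q : ℚ} (hq : padicNorm p q ≤ 1) :
    (p : ℚ) * q ≠ 1 := by
  intro h
  have hlt : padicNorm p ((p : ℚ) * q) < 1 := calc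
    padicNorm p ((p : ℚ) * q) ≤ padicNorm p p * 1 := by
      rw [padicNorm.mul]; exact mul_le_mul_of_nonneg_left hq (padicNorm.nonneg _)
    _ < 1 := by simpa using padicNorm.padicNorm_p_lt_one_of_prime (p := p)
  simp [h] at hlt

theorem Gstar_apply_inl_mem_padicIntegralSubgroup {ι : Type*} {p₁ p₂ p₃ p₄ p₅ : ℕ}
    [Fact p₄.Prime] (h : ¬p₄ ∣ p₁) {U : Set ι} {α : ι} (hα : α ∉ U) {g : (ι ⊕ Unit ⊕ ι) →₀ ℚ}
    (hg : g ∈ Gstar p₁ p₂ p₃ p₄ p₅ U) : g (Sum.inl α) ∈ padicIntegralSubgroup p₄ := by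
  suffices Gstar p₁ p₂ p₃ p₄ p₅ U ≤
      (padicIntegralSubgroup p₄).comap (Finsupp.applyAddHom (Sum.inl α)) from this hg
  refine AddSubgroup.closure_le _ |>.mpr ?_
  rintro v ((((⟨β, n, rfl⟩ | ⟨n, rfl⟩) | ⟨β, n, rfl⟩) | ⟨β, hβ, n, rfl⟩) | ⟨β, hβ, n, rfl⟩)
  · obtain rfl | hβα := eq_or_ne β α
    · simp [xx, mem_padicIntegralSubgroup, padicNorm_inv_pow_of_not_dvd h]
    · simp [xx, hβα]
  · simp [yy]
  · simp [zz]
  · simp [xx, zz, ne_of_mem_of_not_mem hβ hα]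
  · simp [xx, yy, zz, ne_of_mem_of_not_mem hβ hα]

theorem stmt_10 {ι : Type*} (p₁ p₂ p₃ p₄ p₅ : ℕ)
    (hp : ∀ p ∈ [p₁, p₂, p₃, p₄, p₅], p.Prime)
    (hne : [p₁, p₂, p₃, p₄, p₅].Pairwise (· ≠ ·)) (U : Set ι) (α : ι) :
    (∀ n : ℕ, ∃ h ∈ Gstar p₁ p₂ p₃ p₄ p₅ U, xx α + zz α = ((p₄ : ℤ) ^ n) • h) ↔ α ∈ U := by
  have : Fact p₄.Prime := ⟨hp p₄ (by simp)⟩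
  have h₁₄ : ¬p₄ ∣ p₁ := fun hdvd =>
    (List.pairwise_cons.mp hne).1 p₄ (by simp)
      ((Nat.prime_dvd_prime_iff_eq Fact.out (hp p₁ (by simp))).mp hdvd).symm
  refine ⟨fun hdiv => ?_, fun hα n => ?_⟩
  · by_contra hα
    obtain ⟨h, hh, heq⟩ := hdiv 1
    have hcoord : 1 = (p₄ : ℚ) * h (Sum.inl α) := by
      simpa [xx, zz] using congrArg (· (Sum.inl α)) heq
    exact padicNorm_natCast_mul_ne_one p₄
      (Gstar_apply_inl_mem_padicIntegralSubgroup h₁₄ hα hh) hcoord.symm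
  · refine ⟨((p₄ : ℚ) ^ n)⁻¹ • (xx α + zz α), AddSubgroup.subset_closure (.inl (.inr ⟨α, hα, n, rfl⟩)), ?_⟩
    rw [← Int.cast_smul_eq_zsmul ℚ, smul_smul]
    simp
end

section
/- With G*_U as above: for every α ∈ λ, the element x_α + y + z_α is divisible by p₅^n in G*_U for all n ∈ ℕ if and only if α ∈ U. -/
/-!
If `α ∉ U`, every generator of `G*_U` has its `x_α`-coordinate in `ℤ[1/p₁]`, hence so does every
element. A solution of `p₅ h = x_α + y + z_α` would have `x_α`-coordinate `1/p₅ ∉ ℤ[1/p₁]`.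
Conversely, for `α ∈ U` the generators `p₅^{-n} (x_α + y + z_α)` are the required quotients.
-/

/-- The additive group `ℤ[1/p] ⊆ ℚ`. -/
def Rat.powDenSubgroup (p : ℕ) : AddSubgroup ℚ where
  carrier := {q | ∃ m : ℕ, q.den ∣ p ^ m}
  zero_mem' := ⟨0, by simp⟩
  add_mem' := by
    rintro a b ⟨m, hm⟩ ⟨k, hk⟩
    exact ⟨m + k, (Rat.add_den_dvd a b).trans (pow_add p m k ▸ mul_dvd_mul hm hk)⟩
  neg_mem' := by
    rintro a ⟨m, hm⟩
    exact ⟨m, by simpa using hm⟩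

theorem Rat.inv_pow_mem_powDenSubgroup (p n : ℕ) : ((p : ℚ) ^ n)⁻¹ ∈ Rat.powDenSubgroup p := by
  refine ⟨n, ?_⟩
  rw [← Nat.cast_pow, Rat.inv_natCast_den]
  split_ifs <;> simp

theorem Rat.inv_notMem_powDenSubgroup {p q : ℕ} (hq : q.Prime) (hqp : ¬q ∣ p) :
    (q : ℚ)⁻¹ ∉ Rat.powDenSubgroup p := by
  rintro ⟨m, hm⟩
  rw [Rat.inv_natCast_den_of_pos hq.pos] at hm
  exact hqp (hq.dvd_of_dvd_pow hm)

theorem Gstar_apply_inl_mem_powDenSubgroup {ι : Type*} {p₁ p₂ p₃ p₄ p₅ : ℕ} {U : Set ι} {α : ι}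
    (hα : α ∉ U) {v : (ι ⊕ Unit ⊕ ι) →₀ ℚ} (hv : v ∈ Gstar p₁ p₂ p₃ p₄ p₅ U) :
    v (Sum.inl α) ∈ Rat.powDenSubgroup p₁ := by
  suffices Gstar p₁ p₂ p₃ p₄ p₅ U ≤
      (Rat.powDenSubgroup p₁).comap (Finsupp.applyAddHom (Sum.inl α)) from this hv
  refine (AddSubgroup.closure_le _).mpr ?_
  rintro v ((((⟨β, n, rfl⟩ | ⟨n, rfl⟩) | ⟨β, n, rfl⟩) | ⟨β, hβ, n, rfl⟩) | ⟨β, hβ, n, rfl⟩)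
  · obtain rfl | hβα := eq_or_ne β α
    · simpa [xx] using Rat.inv_pow_mem_powDenSubgroup p₁ n
    · simp [xx, hβα, zero_mem]
  · simp [yy, zero_mem]
  · simp [zz, zero_mem]
  all_goals
    have hβα : β ≠ α := by rintro rfl; exact hα hβ
    simp [xx, yy, zz, hβα, zero_mem]

theorem smul_mem_Gstar {ι : Type*} (p₁ p₂ p₃ p₄ p₅ : ℕ) {U : Set ι} {α : ι} (hα : α ∈ U)
    (n : ℕ) : ((p₅ : ℚ) ^ n)⁻¹ • (xx α + yy ι + zz α) ∈ Gstar p₁ p₂ p₃ p₄ p₅ U :=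
  AddSubgroup.subset_closure (Or.inr ⟨α, hα, n, rfl⟩)

theorem stmt_11 {ι : Type*} (p₁ p₂ p₃ p₄ p₅ : ℕ)
    (hp : ∀ p ∈ [p₁, p₂, p₃, p₄, p₅], p.Prime)
    (hne : [p₁, p₂, p₃, p₄, p₅].Pairwise (· ≠ ·)) (U : Set ι) (α : ι) :
    (∀ n : ℕ, ∃ h ∈ Gstar p₁ p₂ p₃ p₄ p₅ U,
      xx α + yy ι + zz α = ((p₅ : ℤ) ^ n) • h) ↔ α ∈ U := by
  have hp₁ : p₁.Prime := hp p₁ (by simp)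
  have hp₅ : p₅.Prime := hp p₅ (by simp)
  have hp₅₁ : ¬p₅ ∣ p₁ := fun h ↦
    List.rel_of_pairwise_cons hne (by simp) ((Nat.prime_dvd_prime_iff_eq hp₅ hp₁).mp h).symm
  have hp₅0 : (p₅ : ℚ) ≠ 0 := mod_cast hp₅.ne_zero
  refine ⟨fun hdiv ↦ ?_, fun hα n ↦ ⟨_, smul_mem_Gstar p₁ p₂ p₃ p₄ p₅ hα n, ?_⟩⟩
  · by_contra hα
    obtain ⟨h, hG, heq⟩ := hdiv 1
    have hcoord : (p₅ : ℚ) * h (Sum.inl α) = 1 := by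
      simpa [xx, yy, zz] using (congrArg (· (Sum.inl α)) heq).symm
    have hinv : h (Sum.inl α) = (p₅ : ℚ)⁻¹ := eq_inv_of_mul_eq_one_right hcoord
    exact Rat.inv_notMem_powDenSubgroup hp₅ hp₅₁
      (hinv ▸ Gstar_apply_inl_mem_powDenSubgroup hα hG)
  · rw [← Int.cast_smul_eq_zsmul ℚ, Int.cast_pow, Int.cast_natCast,
      smul_inv_smul₀ (pow_ne_zero n hp₅0)]
end

section
/- With G*_U as above: the set G*_U[p₁] of elements of G*_U divisible by p₁^n for every n equals the subgroup G_λ generated by {p₁^{-n} x_α : α ∈ λ, n ∈ ℕ}. -/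
/-- `Rq s` is `ℤ[1/s]` as an additive subgroup of `ℚ`. -/
def Rq (s : ℕ) : AddSubgroup ℚ where
  carrier := {q | ∃ (n : ℕ) (m : ℤ), q * (s : ℚ) ^ n = m}
  zero_mem' := ⟨0, 0, by simp⟩
  add_mem' := by
    rintro a b ⟨n₁, m₁, h₁⟩ ⟨n₂, m₂, h₂⟩
    refine ⟨n₁ + n₂, m₁ * s ^ n₂ + m₂ * s ^ n₁, ?_⟩
    push_cast
    rw [pow_add]
    calc (a + b) * ((s:ℚ) ^ n₁ * (s:ℚ) ^ n₂)
        = a * (s:ℚ)^n₁ * (s:ℚ)^n₂ + b * (s:ℚ)^n₂ * (s:ℚ)^n₁ := by ring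
      _ = _ := by rw [h₁, h₂]
  neg_mem' := by
    rintro a ⟨n, m, h⟩
    exact ⟨n, -m, by push_cast; rw [neg_mul, h]⟩

lemma inv_pow_mem_Rq {s : ℕ} (hs : (s : ℚ) ≠ 0) (n : ℕ) : ((s : ℚ) ^ n)⁻¹ ∈ Rq s :=
  ⟨n, 1, by field_simp; simp⟩

lemma Rq_le_mul_right (s r : ℕ) : Rq s ≤ Rq (s * r) := by
  rintro q ⟨n, m, h⟩
  refine ⟨n, m * r ^ n, ?_⟩
  push_cast
  rw [mul_pow, ← mul_assoc, h]

lemma Rq_le_mul_left (s r : ℕ) : Rq r ≤ Rq (s * r) := by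
  rintro q ⟨n, m, h⟩
  refine ⟨n, m * s ^ n, ?_⟩
  push_cast
  rw [mul_pow, mul_comm ((s:ℚ)^n), ← mul_assoc, h]

/-- An element of `ℤ[1/a] ∩ ℤ[1/b]` for coprime `a b` is an integer. -/
lemma int_of_mem_inter {a b : ℕ} (hab : a.Coprime b) {q : ℚ}
    (ha : q ∈ Rq a) (hb : q ∈ Rq b) : ∃ m : ℤ, q = m := by
  obtain ⟨n, m₁, h₁⟩ := ha
  obtain ⟨k, m₂, h₂⟩ := hb
  have key : ∀ (c : ℕ) (j : ℕ) (m : ℤ), q * (c:ℚ)^j = m → q.den ∣ c ^ j := by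
    intro c j m h
    have hz : q.num * (c ^ j : ℕ) = m * q.den := by
      rw [← Rat.num_div_den q] at h
      field_simp at h
      rw [mul_comm (m : ℤ)]; exact_mod_cast h
    have hdvd : (q.den : ℤ) ∣ q.num * (c ^ j : ℕ) := ⟨m, by rw [hz]; ring⟩
    have hdvd' : q.den ∣ q.num.natAbs * c ^ j := by
      have := Int.natAbs_dvd_natAbs.mpr hdvd
      simpa [Int.natAbs_mul, Int.natAbs_pow] using this
    exact (Nat.Coprime.dvd_of_dvd_mul_left (Nat.Coprime.symm q.reduced) hdvd')
  have d1 : q.den ∣ a ^ n := key a n m₁ h₁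
  have d2 : q.den ∣ b ^ k := key b k m₂ h₂
  have hcop : (a ^ n).Coprime (b ^ k) := Nat.Coprime.pow n k hab
  have hden1 : q.den = 1 := Nat.eq_one_of_dvd_coprimes hcop d1 d2
  exact ⟨q.num, by rw [← Rat.num_div_den q, hden1]; simp⟩

lemma eq_zero_of_all_div {p s : ℕ} (hp : 1 < p) (hps : p.Coprime s) {q : ℚ}
    (h : ∀ n : ℕ, ∃ r ∈ Rq s, q = (p : ℚ) ^ n * r) : q = 0 := by
  have key : ∀ n : ℕ, p ^ n ∣ q.num.natAbs := by
    intro n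
    obtain ⟨r, ⟨k, m, hr⟩, hq⟩ := h n
    have hq' : q * (s : ℚ) ^ k = ((p : ℤ) ^ n * m : ℤ) := by
      rw [hq, mul_assoc, hr]; push_cast; ring
    have hz : q.num * (s ^ k : ℕ) = ((p:ℤ) ^ n * m) * q.den := by
      rw [← Rat.num_div_den q] at hq'
      field_simp at hq'
      rw [mul_comm ((p:ℤ) ^ n * m)]; exact_mod_cast hq'
    have hdvd : (p : ℤ) ^ n ∣ q.num * (s ^ k : ℕ) := ⟨m * q.den, by rw [hz]; ring⟩
    have hdvd' : p ^ n ∣ q.num.natAbs * s ^ k := by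
      have := Int.natAbs_dvd_natAbs.mpr hdvd
      simpa [Int.natAbs_mul, Int.natAbs_pow] using this
    exact (Nat.Coprime.pow n k hps).dvd_of_dvd_mul_right hdvd'
  have h0 : q.num.natAbs = 0 := by
    by_contra hne
    have h1 : q.num.natAbs < p ^ q.num.natAbs := Nat.lt_pow_self hp
    have h2 := Nat.le_of_dvd (Nat.pos_of_ne_zero hne) (key q.num.natAbs)
    omega
  have : q.num = 0 := Int.natAbs_eq_zero.mp h0
  exact Rat.num_eq_zero.mp this

open Finsupp in
lemma coord_smul_single {β : Type*} [DecidableEq β] (c : ℚ) (i j : β) :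
    ((c • (Finsupp.single i (1:ℚ))) j) = if i = j then c else 0 := by
  rw [Finsupp.smul_apply, Finsupp.single_apply]
  split <;> simp

lemma Gstar_structure {ι : Type*} {p₁ p₂ p₃ p₄ p₅ : ℕ} {U : Set ι}
    (h1 : (p₁:ℚ) ≠ 0) (h2 : (p₂:ℚ) ≠ 0) (h3 : (p₃:ℚ) ≠ 0) (h4 : (p₄:ℚ) ≠ 0)
    (h5 : (p₅:ℚ) ≠ 0)
    {g : (ι ⊕ Unit ⊕ ι) →₀ ℚ} (hg : g ∈ Gstar p₁ p₂ p₃ p₄ p₅ U) :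
    g (Sum.inr (Sum.inl ())) ∈ Rq (p₂ * p₅) ∧
    ∀ α : ι, ∃ w ∈ Rq (p₄ * p₅),
      g (Sum.inr (Sum.inr α)) - w ∈ Rq p₃ ∧ g (Sum.inl α) - w ∈ Rq p₁ := by
  classical
  refine AddSubgroup.closure_induction ?_ ?_ ?_ ?_ hg
  · rintro v ((((⟨α, n, rfl⟩ | ⟨n, rfl⟩) | ⟨α, n, rfl⟩) | ⟨α, hα, n, rfl⟩) | ⟨α, hα, n, rfl⟩)
    · refine ⟨?_, fun β => ⟨0, zero_mem _, ?_, ?_⟩⟩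
      · simp only [xx, coord_smul_single]; simp only [reduceCtorEq, if_false]
        exact zero_mem _
      · simp only [xx, coord_smul_single]; simp only [reduceCtorEq, if_false, sub_zero]
        exact zero_mem _
      · simp only [xx, coord_smul_single, sub_zero, Sum.inl.injEq]
        split
        · exact inv_pow_mem_Rq h1 n
        · exact zero_mem _
    · refine ⟨?_, fun β => ⟨0, zero_mem _, ?_, ?_⟩⟩
      · simp only [yy, coord_smul_single, if_pos rfl]
        exact Rq_le_mul_right p₂ p₅ (inv_pow_mem_Rq h2 n)
      · simp only [yy, coord_smul_single]; simp only [reduceCtorEq, Sum.inr.injEq, if_false,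
          sub_zero]
        exact zero_mem _
      · simp only [yy, coord_smul_single]; simp only [reduceCtorEq, if_false, sub_zero]
        exact zero_mem _
    · refine ⟨?_, fun β => ⟨0, zero_mem _, ?_, ?_⟩⟩
      · simp only [zz, coord_smul_single]; simp only [reduceCtorEq, Sum.inr.injEq, if_false]
        exact zero_mem _
      · simp only [zz, coord_smul_single, sub_zero, Sum.inr.injEq, Sum.inr.injEq]
        split
        · exact inv_pow_mem_Rq h3 n
        · exact zero_mem _
      · simp only [zz, coord_smul_single]; simp only [reduceCtorEq, if_false, sub_zero]
        exact zero_mem _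
    · refine ⟨?_, fun β => ?_⟩
      · simp only [xx, zz, smul_add, Finsupp.add_apply, coord_smul_single]
        simp
      · by_cases hβ : α = β
        · subst hβ
          refine ⟨((p₄:ℚ)^n)⁻¹, Rq_le_mul_right p₄ p₅ (inv_pow_mem_Rq h4 n), ?_, ?_⟩
          · simp only [xx, zz, smul_add, Finsupp.add_apply, coord_smul_single]
            simp
          · simp only [xx, zz, smul_add, Finsupp.add_apply, coord_smul_single]
            simp
        · refine ⟨0, zero_mem _, ?_, ?_⟩
          · simp only [xx, zz, smul_add, Finsupp.add_apply, coord_smul_single]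
            simp only [reduceCtorEq, Sum.inr.injEq, Sum.inl.injEq, if_neg hβ, if_false,
              add_zero, sub_zero]
            exact zero_mem _
          · simp only [xx, zz, smul_add, Finsupp.add_apply, coord_smul_single]
            simp only [reduceCtorEq, Sum.inl.injEq, if_neg hβ, if_false, add_zero, sub_zero]
            exact zero_mem _
    · refine ⟨?_, fun β => ?_⟩
      · simp only [xx, yy, zz, smul_add, Finsupp.add_apply, coord_smul_single]
        simp only [reduceCtorEq, Sum.inr.injEq, if_false, if_pos rfl, add_zero, zero_add]
        exact Rq_le_mul_left p₂ p₅ (inv_pow_mem_Rq h5 n)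
      · by_cases hβ : α = β
        · subst hβ
          refine ⟨((p₅:ℚ)^n)⁻¹, Rq_le_mul_left p₄ p₅ (inv_pow_mem_Rq h5 n), ?_, ?_⟩
          · simp only [xx, yy, zz, smul_add, Finsupp.add_apply, coord_smul_single]
            simp
          · simp only [xx, yy, zz, smul_add, Finsupp.add_apply, coord_smul_single]
            simp
        · refine ⟨0, zero_mem _, ?_, ?_⟩
          · simp only [xx, yy, zz, smul_add, Finsupp.add_apply, coord_smul_single]
            simp only [reduceCtorEq, Sum.inr.injEq, Sum.inl.injEq, if_neg hβ, if_false,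
              add_zero, zero_add, sub_zero]
            exact zero_mem _
          · simp only [xx, yy, zz, smul_add, Finsupp.add_apply, coord_smul_single]
            simp only [reduceCtorEq, Sum.inl.injEq, if_neg hβ, if_false, add_zero, sub_zero]
            exact zero_mem _
  · exact ⟨by simpa using zero_mem _, fun β => ⟨0, zero_mem _, by simpa using zero_mem _,
      by simpa using zero_mem _⟩⟩
  · rintro a b _ _ ⟨hy₁, hw₁⟩ ⟨hy₂, hw₂⟩
    refine ⟨by rw [Finsupp.add_apply]; exact add_mem hy₁ hy₂, fun β => ?_⟩
    obtain ⟨w₁, hw₁m, hz₁, hx₁⟩ := hw₁ β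
    obtain ⟨w₂, hw₂m, hz₂, hx₂⟩ := hw₂ β
    refine ⟨w₁ + w₂, add_mem hw₁m hw₂m, ?_, ?_⟩
    · rw [Finsupp.add_apply]
      have h : a (Sum.inr (Sum.inr β)) + b (Sum.inr (Sum.inr β)) - (w₁ + w₂)
          = (a (Sum.inr (Sum.inr β)) - w₁) + (b (Sum.inr (Sum.inr β)) - w₂) := by ring
      rw [h]; exact add_mem hz₁ hz₂
    · rw [Finsupp.add_apply]
      have h : a (Sum.inl β) + b (Sum.inl β) - (w₁ + w₂)
          = (a (Sum.inl β) - w₁) + (b (Sum.inl β) - w₂) := by ring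
      rw [h]; exact add_mem hx₁ hx₂
  · rintro a _ ⟨hy, hw⟩
    refine ⟨by rw [Finsupp.neg_apply]; exact neg_mem hy, fun β => ?_⟩
    obtain ⟨w, hwm, hz, hx⟩ := hw β
    refine ⟨-w, neg_mem hwm, ?_, ?_⟩
    · rw [Finsupp.neg_apply]
      have h : -(a (Sum.inr (Sum.inr β))) - (-w) = -(a (Sum.inr (Sum.inr β)) - w) := by ring
      rw [h]; exact neg_mem hz
    · rw [Finsupp.neg_apply]
      have h : -(a (Sum.inl β)) - (-w) = -(a (Sum.inl β) - w) := by ring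
      rw [h]; exact neg_mem hx

theorem stmt_13 {ι : Type*} (p₁ p₂ p₃ p₄ p₅ : ℕ)
    (hp : ∀ p ∈ [p₁, p₂, p₃, p₄, p₅], p.Prime)
    (hne : [p₁, p₂, p₃, p₄, p₅].Pairwise (· ≠ ·)) (U : Set ι) :
    {g | g ∈ Gstar p₁ p₂ p₃ p₄ p₅ U ∧
        ∀ n : ℕ, ∃ h ∈ Gstar p₁ p₂ p₃ p₄ p₅ U, g = ((p₁ : ℤ) ^ n) • h} =
      (Glam ι p₁ : Set ((ι ⊕ Unit ⊕ ι) →₀ ℚ)) := by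
  classical
  have hp1 : p₁.Prime := hp p₁ (by simp)
  have hp2 : p₂.Prime := hp p₂ (by simp)
  have hp3 : p₃.Prime := hp p₃ (by simp)
  have hp4 : p₄.Prime := hp p₄ (by simp)
  have hp5 : p₅.Prime := hp p₅ (by simp)
  simp only [List.pairwise_cons, List.mem_cons, List.not_mem_nil, or_false,
    List.mem_singleton, forall_eq_or_imp, forall_eq, List.Pairwise.nil, and_true] at hne
  obtain ⟨⟨h12, h13, h14, h15⟩, ⟨h23, h24, h25⟩, ⟨h34, h35⟩, h45, -⟩ := hne
  have n1 : (p₁:ℚ) ≠ 0 := Nat.cast_ne_zero.mpr hp1.ne_zero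
  have n2 : (p₂:ℚ) ≠ 0 := Nat.cast_ne_zero.mpr hp2.ne_zero
  have n3 : (p₃:ℚ) ≠ 0 := Nat.cast_ne_zero.mpr hp3.ne_zero
  have n4 : (p₄:ℚ) ≠ 0 := Nat.cast_ne_zero.mpr hp4.ne_zero
  have n5 : (p₅:ℚ) ≠ 0 := Nat.cast_ne_zero.mpr hp5.ne_zero
  have c12 : p₁.Coprime p₂ := (Nat.coprime_primes hp1 hp2).mpr h12
  have c13 : p₁.Coprime p₃ := (Nat.coprime_primes hp1 hp3).mpr h13
  have c14 : p₁.Coprime p₄ := (Nat.coprime_primes hp1 hp4).mpr h14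
  have c15 : p₁.Coprime p₅ := (Nat.coprime_primes hp1 hp5).mpr h15
  have c34 : p₃.Coprime p₄ := (Nat.coprime_primes hp3 hp4).mpr h34
  have c35 : p₃.Coprime p₅ := (Nat.coprime_primes hp3 hp5).mpr h35
  have c125 : p₁.Coprime (p₂ * p₅) := Nat.Coprime.mul_right c12 c15
  have c1345 : p₁.Coprime (p₃ * (p₄ * p₅)) :=
    Nat.Coprime.mul_right c13 (Nat.Coprime.mul_right c14 c15)
  have c345 : p₃.Coprime (p₄ * p₅) := Nat.Coprime.mul_right c34 c35
  ext g
  simp only [Set.mem_setOf_eq, SetLike.mem_coe]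
  constructor
  · rintro ⟨hmem, hdiv⟩
    have hy : g (Sum.inr (Sum.inl ())) = 0 := by
      apply eq_zero_of_all_div hp1.one_lt c125
      intro n
      obtain ⟨h, hh, hgh⟩ := hdiv n
      refine ⟨h (Sum.inr (Sum.inl ())), (Gstar_structure n1 n2 n3 n4 n5 hh).1, ?_⟩
      rw [hgh, Finsupp.smul_apply, zsmul_eq_mul]
      push_cast
      ring
    have hz : ∀ α, g (Sum.inr (Sum.inr α)) = 0 := by
      intro α
      apply eq_zero_of_all_div hp1.one_lt c1345
      intro n
      obtain ⟨h, hh, hgh⟩ := hdiv n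
      obtain ⟨w, hwm, hzc, _⟩ := (Gstar_structure n1 n2 n3 n4 n5 hh).2 α
      refine ⟨h (Sum.inr (Sum.inr α)), ?_, ?_⟩
      · have he : h (Sum.inr (Sum.inr α)) = (h (Sum.inr (Sum.inr α)) - w) + w := by ring
        rw [he]
        exact add_mem (Rq_le_mul_right p₃ (p₄*p₅) hzc) (Rq_le_mul_left p₃ (p₄*p₅) hwm)
      · rw [hgh, Finsupp.smul_apply, zsmul_eq_mul]
        push_cast
        ring
    have hx : ∀ α, g (Sum.inl α) ∈ Rq p₁ := by
      intro α
      obtain ⟨w, hwm, hzc, hxc⟩ := (Gstar_structure n1 n2 n3 n4 n5 hmem).2 α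
      rw [hz α, zero_sub] at hzc
      have hw3 : w ∈ Rq p₃ := by simpa using neg_mem hzc
      obtain ⟨m, hm⟩ := int_of_mem_inter c345 hw3 hwm
      have hw1 : w ∈ Rq p₁ := ⟨0, m, by rw [hm]; simp⟩
      have he : g (Sum.inl α) = (g (Sum.inl α) - w) + w := by ring
      rw [he]
      exact add_mem hxc hw1
    rw [show g = ∑ a ∈ g.support, Finsupp.single a (g a) from (Finsupp.sum_single g).symm]
    refine AddSubgroup.sum_mem _ fun a ha => ?_
    rcases a with α | u | β
    · obtain ⟨n, m, hm⟩ := hx α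
      have hval : g (Sum.inl α) = (m:ℚ) / (p₁:ℚ)^n := by
        rw [eq_div_iff (pow_ne_zero n n1)]; exact hm
      have he : Finsupp.single (Sum.inl α : ι ⊕ Unit ⊕ ι) (g (Sum.inl α))
          = (m : ℤ) • (((p₁:ℚ)^n)⁻¹ • xx α) := by
        rw [← Int.cast_smul_eq_zsmul ℚ, smul_smul, xx, Finsupp.smul_single', mul_one, hval,
          div_eq_mul_inv]
      rw [he]
      refine AddSubgroup.zsmul_mem _ (AddSubgroup.subset_closure ?_) m
      exact ⟨α, n, rfl⟩
    · exact absurd (by cases u; exact hy) (Finsupp.mem_support_iff.mp ha)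
    · exact absurd (hz β) (Finsupp.mem_support_iff.mp ha)
  · intro hg
    refine ⟨AddSubgroup.closure_mono
      (fun v hv => Or.inl (Or.inl (Or.inl (Or.inl hv)))) hg, fun n => ?_⟩
    have hmemL : ((p₁:ℚ)^n)⁻¹ • g ∈ Glam ι p₁ := by
      refine AddSubgroup.closure_induction
        (p := fun x _ => ((p₁:ℚ)^n)⁻¹ • x ∈ Glam ι p₁) ?_ ?_ ?_ ?_ hg
      · rintro v ⟨α, m, rfl⟩
        apply AddSubgroup.subset_closure
        exact ⟨α, n + m, by rw [smul_smul, ← mul_inv, ← pow_add]⟩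
      · show ((p₁:ℚ)^n)⁻¹ • (0 : (ι ⊕ Unit ⊕ ι) →₀ ℚ) ∈ Glam ι p₁
        rw [smul_zero]; exact zero_mem _
      · intro a b _ _ ha hb
        show ((p₁:ℚ)^n)⁻¹ • (a + b) ∈ Glam ι p₁
        rw [smul_add]; exact add_mem ha hb
      · intro a _ ha
        show ((p₁:ℚ)^n)⁻¹ • (-a) ∈ Glam ι p₁
        rw [smul_neg]; exact neg_mem ha
    refine ⟨((p₁:ℚ)^n)⁻¹ • g, AddSubgroup.closure_mono
      (fun v hv => Or.inl (Or.inl (Or.inl (Or.inl hv)))) hmemL, ?_⟩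
    rw [← Int.cast_smul_eq_zsmul ℚ, smul_smul]
    push_cast
    rw [mul_inv_cancel₀ (pow_ne_zero n n1), one_smul]
end

section
/- Let U, V ⊆ λ with U ≠ V, and let G*_U, G*_V be as in the construction. Then there is no group isomorphism φ : G*_U → G*_V such that φ(x_α) = x_α for every α ∈ λ and φ(y) = y. -/
/-- key arithmetic: if x ∈ ℤ[1/p] and x/q^n ∈ ℤ[1/p] for all n (q prime ≠ p), then x = 0. -/
lemma keyArith (p q : ℕ) (hp : p.Prime) (hq : q.Prime) (hpq : p ≠ q) {x : ℚ}
    (hx : ∃ (m : ℤ) (k : ℕ), x = (m : ℚ) / (p : ℚ) ^ k)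
    (hdiv : ∀ n : ℕ, ∃ (m : ℤ) (k : ℕ), x = (q : ℚ) ^ n * ((m : ℚ) / (p : ℚ) ^ k)) :
    x = 0 := by
  obtain ⟨m₀, k₀, rfl⟩ := hx
  have hp0 : (p : ℚ) ≠ 0 := by exact_mod_cast hp.ne_zero
  suffices h : m₀ = 0 by simp [h]
  have hdvd : ∀ n : ℕ, (q : ℤ) ^ n ∣ m₀ := by
    intro n
    obtain ⟨m, k, hmk⟩ := hdiv n
    have hq' : (m₀ : ℚ) * (p : ℚ) ^ k = (q : ℚ) ^ n * m * (p : ℚ) ^ k₀ := by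
      field_simp at hmk ⊢
      linear_combination hmk
    have hz : (m₀ : ℤ) * (p : ℤ) ^ k = (q : ℤ) ^ n * m * (p : ℤ) ^ k₀ := by
      exact_mod_cast hq'
    have hco : IsCoprime ((q : ℤ) ^ n) ((p : ℤ) ^ k) := by
      apply IsCoprime.pow
      rw [Int.isCoprime_iff_gcd_eq_one]
      simpa [Int.gcd_natCast_natCast] using (Nat.coprime_primes hq hp).mpr (Ne.symm hpq)
    exact hco.dvd_of_dvd_mul_right ⟨m * (p:ℤ)^k₀, by linarith [hz]⟩
  by_contra hm
  have h1 : (q : ℤ) ^ m₀.natAbs ≤ |m₀| :=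
    Int.le_of_dvd (abs_pos.mpr hm) ((hdvd m₀.natAbs).trans (self_dvd_abs m₀))
  have h2 : (m₀.natAbs : ℤ) < (q : ℤ) ^ m₀.natAbs := by
    have := Nat.lt_pow_self (n := m₀.natAbs) hq.one_lt
    exact_mod_cast this
  rw [Int.abs_eq_natAbs] at h1
  omega

section
variable {ι : Type*} (p₁ p₂ p₃ p₄ p₅ : ℕ)

/-- If `α ∉ V`, the `x_α`-coordinate of every element of `G*_V` lies in `ℤ[1/p₁]`. -/
lemma memA (hp1 : (p₁ : ℚ) ≠ 0) (V : Set ι) (α : ι) (hα : α ∉ V) {v : (ι ⊕ Unit ⊕ ι) →₀ ℚ}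
    (hv : v ∈ Gstar p₁ p₂ p₃ p₄ p₅ V) :
    ∃ (m : ℤ) (k : ℕ), v (Sum.inl α) = (m : ℚ) / (p₁ : ℚ) ^ k := by
  refine AddSubgroup.closure_induction ?_ ?_ ?_ ?_ hv
  · rintro x ((((⟨β, n, rfl⟩ | ⟨n, rfl⟩) | ⟨β, n, rfl⟩) | ⟨β, hβ, n, rfl⟩) | ⟨β, hβ, n, rfl⟩)
    · by_cases h : β = α
      · exact ⟨1, n, by simp [h, xx, Finsupp.single_apply]⟩
      · exact ⟨0, 0, by simp [xx, Finsupp.single_apply, h]⟩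
    · exact ⟨0, 0, by simp [yy, Finsupp.single_apply]⟩
    · exact ⟨0, 0, by simp [zz, Finsupp.single_apply]⟩
    · have h : β ≠ α := fun h => hα (h ▸ hβ)
      exact ⟨0, 0, by simp [xx, zz, Finsupp.single_apply, h]⟩
    · have h : β ≠ α := fun h => hα (h ▸ hβ)
      exact ⟨0, 0, by simp [xx, yy, zz, Finsupp.single_apply, h]⟩
  · exact ⟨0, 0, by simp⟩
  · rintro x y hx hy ⟨m, k, hm⟩ ⟨m', k', hm'⟩
    refine ⟨m * (p₁:ℤ) ^ k' + m' * (p₁:ℤ) ^ k, k + k', ?_⟩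
    simp only [Finsupp.add_apply, hm, hm']
    rw [div_add_div _ _ (pow_ne_zero k hp1) (pow_ne_zero k' hp1), pow_add]
    push_cast
    ring_nf
  · rintro x hx ⟨m, k, hm⟩
    exact ⟨-m, k, by simp [hm, neg_div]⟩

lemma xx_mem (W : Set ι) (α : ι) : xx α ∈ Gstar p₁ p₂ p₃ p₄ p₅ W :=
  AddSubgroup.subset_closure (Or.inl (Or.inl (Or.inl (Or.inl ⟨α, 0, by simp⟩))))

lemma yy_mem (W : Set ι) : yy ι ∈ Gstar p₁ p₂ p₃ p₄ p₅ W :=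
  AddSubgroup.subset_closure (Or.inl (Or.inl (Or.inl (Or.inr ⟨0, by simp⟩))))

lemma zz_mem (W : Set ι) (α : ι) (n : ℕ) :
    ((p₃ : ℚ) ^ n)⁻¹ • zz α ∈ Gstar p₁ p₂ p₃ p₄ p₅ W :=
  AddSubgroup.subset_closure (Or.inl (Or.inl (Or.inr ⟨α, n, rfl⟩)))

lemma w_mem (W : Set ι) (α : ι) (hα : α ∈ W) (n : ℕ) :
    ((p₅ : ℚ) ^ n)⁻¹ • (xx α + yy ι + zz α) ∈ Gstar p₁ p₂ p₃ p₄ p₅ W :=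
  AddSubgroup.subset_closure (Or.inr ⟨α, hα, n, rfl⟩)

/-- A representation of divisibility inside a subgroup. -/
lemma smul_rep {G : AddSubgroup ((ι ⊕ Unit ⊕ ι) →₀ ℚ)} {v : (ι ⊕ Unit ⊕ ι) →₀ ℚ}
    (q : ℕ) (hq : (q : ℚ) ≠ 0) (n : ℕ) (hmem : ((q : ℚ) ^ n)⁻¹ • v ∈ G) (hv : v ∈ G) :
    (⟨v, hv⟩ : G) = (q ^ n : ℕ) • (⟨((q : ℚ) ^ n)⁻¹ • v, hmem⟩ : G) := by
  apply Subtype.ext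
  push_cast
  rw [← Nat.cast_smul_eq_nsmul ℚ, smul_smul]
  push_cast
  rw [mul_inv_cancel₀ (by positivity), one_smul]

set_option synthInstance.maxHeartbeats 1000000 in
/-- The core contradiction: if `α ∈ U \ V` and `φ : G*_U ≃+ G*_V` fixes `x_α` and `y`,
we get `False`. -/
lemma core (h1 : p₁.Prime) (h3 : p₃.Prime) (h5 : p₅.Prime) (h13 : p₁ ≠ p₃) (h15 : p₁ ≠ p₅)
    (U V : Set ι) (α : ι) (hU : α ∈ U) (hV : α ∉ V)
    (φ : Gstar p₁ p₂ p₃ p₄ p₅ U ≃+ Gstar p₁ p₂ p₃ p₄ p₅ V)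
    (hx : ∀ g : Gstar p₁ p₂ p₃ p₄ p₅ U, (g : (ι ⊕ Unit ⊕ ι) →₀ ℚ) = xx α →
      ((φ g : Gstar p₁ p₂ p₃ p₄ p₅ V) : (ι ⊕ Unit ⊕ ι) →₀ ℚ) = xx α)
    (hy : ∀ g : Gstar p₁ p₂ p₃ p₄ p₅ U, (g : (ι ⊕ Unit ⊕ ι) →₀ ℚ) = yy ι →
      ((φ g : Gstar p₁ p₂ p₃ p₄ p₅ V) : (ι ⊕ Unit ⊕ ι) →₀ ℚ) = yy ι) : False := by
  have hp1 : (p₁ : ℚ) ≠ 0 := by exact_mod_cast h1.ne_zero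
  have hp3 : (p₃ : ℚ) ≠ 0 := by exact_mod_cast h3.ne_zero
  have hp5 : (p₅ : ℚ) ≠ 0 := by exact_mod_cast h5.ne_zero
  have hzmem : zz α ∈ Gstar p₁ p₂ p₃ p₄ p₅ U := by
    simpa using zz_mem p₁ p₂ p₃ p₄ p₅ U α 0
  set zU : Gstar p₁ p₂ p₃ p₄ p₅ U := ⟨zz α, hzmem⟩ with hzU
  set X : ℚ := ((φ zU : Gstar p₁ p₂ p₃ p₄ p₅ V) : (ι ⊕ Unit ⊕ ι) →₀ ℚ) (Sum.inl α) with hX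
  -- X = 0 since z_α is p₃-divisible
  have hX0 : X = 0 := by
    apply keyArith p₁ p₃ h1 h3 h13
    · exact memA p₁ p₂ p₃ p₄ p₅ hp1 V α hV (φ zU).2
    · intro n
      have hrep : zU = (p₃ ^ n : ℕ) • (⟨_, zz_mem p₁ p₂ p₃ p₄ p₅ U α n⟩ :
          Gstar p₁ p₂ p₃ p₄ p₅ U) := smul_rep p₃ hp3 n _ _
      have : X = (p₃ : ℚ) ^ n *
          ((φ ⟨_, zz_mem p₁ p₂ p₃ p₄ p₅ U α n⟩ : Gstar p₁ p₂ p₃ p₄ p₅ V) :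
            (ι ⊕ Unit ⊕ ι) →₀ ℚ) (Sum.inl α) := by
        rw [hX, hrep, map_nsmul]
        push_cast
        rw [← Nat.cast_smul_eq_nsmul ℚ]
        push_cast
        simp [Finsupp.smul_apply]
      obtain ⟨m, k, hmk⟩ := memA p₁ p₂ p₃ p₄ p₅ hp1 V α hV
        (φ ⟨_, zz_mem p₁ p₂ p₃ p₄ p₅ U α n⟩).2
      exact ⟨m, k, by rw [this, hmk]⟩
  -- now consider w = x_α + y + z_α
  have hwmem : xx α + yy ι + zz α ∈ Gstar p₁ p₂ p₃ p₄ p₅ U := by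
    simpa using w_mem p₁ p₂ p₃ p₄ p₅ U α hU 0
  set wU : Gstar p₁ p₂ p₃ p₄ p₅ U := ⟨xx α + yy ι + zz α, hwmem⟩ with hwU
  set xU : Gstar p₁ p₂ p₃ p₄ p₅ U := ⟨xx α, xx_mem p₁ p₂ p₃ p₄ p₅ U α⟩ with hxU
  set yU : Gstar p₁ p₂ p₃ p₄ p₅ U := ⟨yy ι, yy_mem p₁ p₂ p₃ p₄ p₅ U⟩ with hyU
  have hsplit : wU = xU + yU + zU := by
    apply Subtype.ext
    rfl
  have hw : ((φ wU : Gstar p₁ p₂ p₃ p₄ p₅ V) : (ι ⊕ Unit ⊕ ι) →₀ ℚ) =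
      xx α + yy ι + ((φ zU : Gstar p₁ p₂ p₃ p₄ p₅ V) : (ι ⊕ Unit ⊕ ι) →₀ ℚ) := by
    rw [hsplit, map_add, map_add]
    push_cast
    rw [hx xU rfl, hy yU rfl]
  have hwcoord : ((φ wU : Gstar p₁ p₂ p₃ p₄ p₅ V) : (ι ⊕ Unit ⊕ ι) →₀ ℚ) (Sum.inl α) = 1 := by
    rw [hw]
    simp [xx, yy, Finsupp.single_apply, ← hX, hX0]
  -- w is p₅-divisible, contradiction
  have : (1 : ℚ) = 0 := by
    rw [← hwcoord]
    apply keyArith p₁ p₅ h1 h5 h15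
    · exact memA p₁ p₂ p₃ p₄ p₅ hp1 V α hV (φ wU).2
    · intro n
      have hrep : wU = (p₅ ^ n : ℕ) • (⟨_, w_mem p₁ p₂ p₃ p₄ p₅ U α hU n⟩ :
          Gstar p₁ p₂ p₃ p₄ p₅ U) := smul_rep p₅ hp5 n _ _
      have heq : ((φ wU : Gstar p₁ p₂ p₃ p₄ p₅ V) : (ι ⊕ Unit ⊕ ι) →₀ ℚ) (Sum.inl α)
          = (p₅ : ℚ) ^ n *
          ((φ ⟨_, w_mem p₁ p₂ p₃ p₄ p₅ U α hU n⟩ : Gstar p₁ p₂ p₃ p₄ p₅ V) :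
            (ι ⊕ Unit ⊕ ι) →₀ ℚ) (Sum.inl α) := by
        rw [hrep, map_nsmul]
        push_cast
        rw [← Nat.cast_smul_eq_nsmul ℚ]
        push_cast
        simp [Finsupp.smul_apply]
      obtain ⟨m, k, hmk⟩ := memA p₁ p₂ p₃ p₄ p₅ hp1 V α hV
        (φ ⟨_, w_mem p₁ p₂ p₃ p₄ p₅ U α hU n⟩).2
      exact ⟨m, k, by rw [heq, hmk]⟩
  norm_num at this

end

theorem stmt_15 {ι : Type*} (p₁ p₂ p₃ p₄ p₅ : ℕ)
    (hp : ∀ p ∈ [p₁, p₂, p₃, p₄, p₅], p.Prime)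
    (hne : [p₁, p₂, p₃, p₄, p₅].Pairwise (· ≠ ·)) (U V : Set ι) (hUV : U ≠ V) :
    ∀ φ : Gstar p₁ p₂ p₃ p₄ p₅ U ≃+ Gstar p₁ p₂ p₃ p₄ p₅ V,
      (∀ (g : Gstar p₁ p₂ p₃ p₄ p₅ U) (α : ι), (g : (ι ⊕ Unit ⊕ ι) →₀ ℚ) = xx α →
        ((φ g : Gstar p₁ p₂ p₃ p₄ p₅ V) : (ι ⊕ Unit ⊕ ι) →₀ ℚ) = xx α) →
      (∀ g : Gstar p₁ p₂ p₃ p₄ p₅ U, (g : (ι ⊕ Unit ⊕ ι) →₀ ℚ) = yy ι →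
        ((φ g : Gstar p₁ p₂ p₃ p₄ p₅ V) : (ι ⊕ Unit ⊕ ι) →₀ ℚ) = yy ι) →
      False := by
  intro φ hx hy
  simp only [List.mem_cons, List.not_mem_nil, or_false, forall_eq_or_imp, forall_eq] at hp
  obtain ⟨h1, h2, h3, h4, h5⟩ := hp
  simp only [List.pairwise_cons, List.mem_cons, List.not_mem_nil, or_false] at hne
  have h13 : p₁ ≠ p₃ := hne.1 p₃ (by tauto)
  have h15 : p₁ ≠ p₅ := hne.1 p₅ (by tauto)
  have hex : ∃ α, (α ∈ U ∧ α ∉ V) ∨ (α ∈ V ∧ α ∉ U) := by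
    by_contra h
    push_neg at h
    apply hUV
    ext β
    have := h β
    constructor <;> intro hb <;> by_contra hb'
    · exact absurd hb' (not_not.mpr (this.1 hb))
    · exact absurd hb' (not_not.mpr (this.2 hb))
  obtain ⟨α, hα | hα⟩ := hex
  · exact core p₁ p₂ p₃ p₄ p₅ h1 h3 h5 h13 h15 U V α hα.1 hα.2 φ (fun g => hx g α) hy
  · -- use φ.symm
    refine core p₁ p₂ p₃ p₄ p₅ h1 h3 h5 h13 h15 V U α hα.1 hα.2 φ.symm ?_ ?_
    · intro g hg
      have hgφ : g = φ ⟨xx α, xx_mem p₁ p₂ p₃ p₄ p₅ U α⟩ := by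
        apply Subtype.ext
        rw [hg, hx ⟨xx α, xx_mem p₁ p₂ p₃ p₄ p₅ U α⟩ α rfl]
      rw [hgφ, AddEquiv.symm_apply_apply]
    · intro g hg
      have hgφ : g = φ ⟨yy ι, yy_mem p₁ p₂ p₃ p₄ p₅ U⟩ := by
        apply Subtype.ext
        rw [hg, hy ⟨yy ι, yy_mem p₁ p₂ p₃ p₄ p₅ U⟩ rfl]
      rw [hgφ, AddEquiv.symm_apply_apply]
end

section
/- With G*_U as above, the assignment U ↦ G*_U (for U ⊆ λ) produces 2^{|λ|} pairwise distinct subgroups of the ambient ℚ-vector space; concretely, the map from the powerset of λ to subgroups sending U to G*_U is injective. -/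
/-- The additive subgroup `ℤ[1/p]` of `ℚ`. -/
def ratLoc (p : ℕ) : AddSubgroup ℚ where
  carrier := {q | ∃ (m : ℤ) (k : ℕ), q * (p : ℚ) ^ k = (m : ℚ)}
  zero_mem' := ⟨0, 0, by simp⟩
  add_mem' := by
    rintro a b ⟨m, k, ha⟩ ⟨m', k', hb⟩
    exact ⟨m * p ^ k' + m' * p ^ k, k + k', by
      push_cast
      rw [pow_add]
      linear_combination (p : ℚ) ^ k' * ha + (p : ℚ) ^ k * hb⟩
  neg_mem' := by
    rintro a ⟨m, k, ha⟩
    exact ⟨-m, k, by push_cast; linear_combination -ha⟩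

theorem Gstar_subset_of_eq {ι : Type*} (p₁ p₂ p₃ p₄ p₅ : ℕ)
    (hp : ∀ p ∈ [p₁, p₂, p₃, p₄, p₅], p.Prime)
    (hne : [p₁, p₂, p₃, p₄, p₅].Pairwise (· ≠ ·))
    {U V : Set ι} (h : Gstar p₁ p₂ p₃ p₄ p₅ U = Gstar p₁ p₂ p₃ p₄ p₅ V) :
    U ⊆ V := by
  intro α hU
  by_contra hV
  have hp1 : (p₁ : ℚ) ≠ 0 := by exact_mod_cast (hp p₁ (by simp)).ne_zero
  -- the detecting subgroup: the x_α-coordinate lies in ℤ[1/p₁]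
  set H : AddSubgroup ((ι ⊕ Unit ⊕ ι) →₀ ℚ) :=
    (ratLoc p₁).comap (Finsupp.applyAddHom (Sum.inl α)) with hH
  have hle : Gstar p₁ p₂ p₃ p₄ p₅ V ≤ H := by
    rw [Gstar]
    apply (AddSubgroup.closure_le _).mpr
    rintro v ((((⟨β, n, rfl⟩ | ⟨n, rfl⟩) | ⟨β, n, rfl⟩) | ⟨β, hβ, n, rfl⟩) | ⟨β, hβ, n, rfl⟩) <;>
      simp only [hH, AddSubgroup.mem_comap, Finsupp.applyAddHom_apply, SetLike.mem_coe,
        Finsupp.smul_apply, Finsupp.add_apply, xx, yy, zz, smul_eq_mul]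
    · by_cases hβα : β = α
      · subst hβα
        rw [Finsupp.single_eq_same, mul_one]
        exact ⟨1, n, by field_simp; norm_num⟩
      · rw [Finsupp.single_eq_of_ne' (by simpa using hβα), mul_zero]
        exact zero_mem _
    · rw [Finsupp.single_eq_of_ne (by simp), mul_zero]
      exact zero_mem _
    · rw [Finsupp.single_eq_of_ne (by simp), mul_zero]
      exact zero_mem _
    · have hβα : β ≠ α := fun e => hV (e ▸ hβ)
      rw [Finsupp.single_eq_of_ne' (by simpa using hβα),
        Finsupp.single_eq_of_ne (by simp), add_zero, mul_zero]
      exact zero_mem _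
    · have hβα : β ≠ α := fun e => hV (e ▸ hβ)
      rw [Finsupp.single_eq_of_ne' (by simpa using hβα),
        Finsupp.single_eq_of_ne (by simp), Finsupp.single_eq_of_ne (by simp),
        add_zero, add_zero, mul_zero]
      exact zero_mem _
  have hg : ((p₅ : ℚ) ^ 1)⁻¹ • (xx α + yy ι + zz α) ∈ Gstar p₁ p₂ p₃ p₄ p₅ U :=
    AddSubgroup.subset_closure (Or.inr ⟨α, hU, 1, rfl⟩)
  rw [h] at hg
  have hmem := hle hg
  have hcoord : (xx α + yy ι + zz α) (Sum.inl α) = 1 := by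
    rw [Finsupp.add_apply, Finsupp.add_apply, xx, yy, zz,
      Finsupp.single_eq_same, Finsupp.single_eq_of_ne (by simp),
      Finsupp.single_eq_of_ne (by simp)]
    norm_num
  rw [hH, AddSubgroup.mem_comap, Finsupp.applyAddHom_apply, Finsupp.smul_apply, hcoord,
    smul_eq_mul, mul_one, pow_one] at hmem
  obtain ⟨m, k, hmk⟩ := hmem
  have hp5 : (p₅ : ℚ) ≠ 0 := by exact_mod_cast (hp p₅ (by simp)).ne_zero
  have h' : (p₁ : ℚ) ^ k = (m : ℚ) * p₅ := by
    field_simp at hmk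
    linarith
  have hz : (p₁ : ℤ) ^ k = m * p₅ := by exact_mod_cast h'
  have hdvd : (p₅ : ℤ) ∣ (p₁ : ℤ) ^ k := ⟨m, by linarith⟩
  have hdvdn : p₅ ∣ p₁ ^ k := by exact_mod_cast hdvd
  have heq : p₅ = p₁ :=
    (Nat.prime_dvd_prime_iff_eq (hp p₅ (by simp)) (hp p₁ (by simp))).mp
      ((hp p₅ (by simp)).dvd_of_dvd_pow hdvdn)
  have hne15 : p₁ ≠ p₅ := by
    simp only [List.pairwise_cons] at hne
    exact hne.1 p₅ (by simp)
  exact hne15 heq.symm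

theorem stmt_19 {ι : Type*} (p₁ p₂ p₃ p₄ p₅ : ℕ)
    (hp : ∀ p ∈ [p₁, p₂, p₃, p₄, p₅], p.Prime)
    (hne : [p₁, p₂, p₃, p₄, p₅].Pairwise (· ≠ ·)) :
    Function.Injective (fun U : Set ι => Gstar p₁ p₂ p₃ p₄ p₅ U) := by
  intro U V h
  simp only at h
  exact Set.Subset.antisymm (Gstar_subset_of_eq p₁ p₂ p₃ p₄ p₅ hp hne h)
    (Gstar_subset_of_eq p₁ p₂ p₃ p₄ p₅ hp hne h.symm)
end
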